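/- arXiv:0807.5080 — 2 statements merged into one kernel-verified Lean document; each statement's English description precedes it below -/
import Mathlib

section
/- Let S ≥ 2, β > 0, λ ∈ ℝ. Define the mean-field free energy F^{mf}(ρ) = (1/2)Σ_{s≠s'} ρ_s ρ_{s'} − λ Σ_s ρ_s + (1/β) Σ_s ρ_s(log ρ_s − 1) for ρ ∈ (ℝ≥0)^S, and suppose F^{mf} attains a finite infimum m over (ℝ≥0)^S. Let X be a finite set, J : X×X → ℝ≥0 symmetric with Σ_y J(x,y) = 1 for all x, and define for ρ : X → (ℝ≥0)^S the functional F(ρ) = Σ_x [ e^{mf}((Jρ)(x)) − (1/β) 𝒮(ρ(x)) ], where e^{mf}(u) = (1/2)Σ_{s≠s'} u_s u_{s'} − λ Σ_s u_s and 𝒮(u) = −Σ_s u_s(log u_s − 1), and (Jρ)(x,s) = Σ_y J(x,y)ρ(y,s). Then F(ρ) ≥ |X|·m for every ρ, with equality when ρ is constantly equal to a minimizer of F^{mf}. -/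
/-!
Writing `Fᵐᶠ = eᵐᶠ - 𝒮/β`, the functional splits as
`F ρ = ∑ₓ Fᵐᶠ((Jρ)(x)) + (1/β) (∑ₓ 𝒮((Jρ)(x)) - ∑ₓ 𝒮(ρ(x)))`.
Each term of the first sum is at least `m`. The second is nonnegative: the entropy `𝒮` is concave
and `J` is doubly stochastic, so averaging by `J` can only increase the total entropy (Jensen in
each row, then the column sums redistribute the weights). For constant `ρ`, `Jρ = ρ` and the
entropy terms cancel.
-/

open Finset Matrix

theorem ConcaveOn.sum_le_sum_map_doublyStochastic {X E : Type*} [Fintype X] [DecidableEq X]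
    [AddCommGroup E] [Module ℝ E] {s : Set E} {f : E → ℝ} (hf : ConcaveOn ℝ s f)
    {J : Matrix X X ℝ} (hJ : J ∈ doublyStochastic ℝ X) {ρ : X → E} (hρ : ∀ x, ρ x ∈ s) :
    ∑ x, f (ρ x) ≤ ∑ x, f (∑ y, J x y • ρ y) :=
  calc ∑ x, f (ρ x) = ∑ y, (∑ x, J x y) * f (ρ y) := by
        simp only [sum_col_of_mem_doublyStochastic hJ, one_mul]
    _ = ∑ x, ∑ y, J x y • f (ρ y) := by
        simp only [smul_eq_mul, sum_mul]
        exact sum_comm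
    _ ≤ ∑ x, f (∑ y, J x y • ρ y) := sum_le_sum fun x _ =>
        hf.le_map_sum (fun y _ => nonneg_of_mem_doublyStochastic hJ)
          (sum_row_of_mem_doublyStochastic hJ x) fun y _ => hρ y

theorem ConcaveOn.sum_comp_apply {ι : Type*} [Fintype ι] {φ : ℝ → ℝ} {s : Set ℝ}
    (hφ : ConcaveOn ℝ s φ) :
    ConcaveOn ℝ (Set.univ.pi fun _ : ι => s) (fun u => ∑ i, φ (u i)) := by
  refine ⟨convex_pi fun _ _ => hφ.1, fun u hu v hv a b ha hb hab => ?_⟩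
  simp only [smul_eq_mul, mul_sum, ← sum_add_distrib, Pi.add_apply, Pi.smul_apply]
  exact sum_le_sum fun i _ => hφ.2 (hu i trivial) (hv i trivial) ha hb hab

section Entropy

variable {ι : Type*} [Fintype ι]

noncomputable def entropy (u : ι → ℝ) : ℝ :=
  -∑ i, u i * (Real.log (u i) - 1)

theorem entropy_eq_sum_add_negMulLog (u : ι → ℝ) :
    entropy u = ∑ i, (u i + Real.negMulLog (u i)) := by
  simp only [entropy, Real.negMulLog, ← sum_neg_distrib]
  exact sum_congr rfl fun i _ => by ring

theorem concaveOn_entropy :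
    ConcaveOn ℝ (Set.univ.pi fun _ : ι => Set.Ici 0) entropy := by
  convert ((concaveOn_id (convex_Ici (0 : ℝ))).add Real.concaveOn_negMulLog).sum_comp_apply
    using 1
  exact funext entropy_eq_sum_add_negMulLog

end Entropy

theorem stmt10_general (S : ℕ) (β lam : ℝ) (hβ : 0 < β) (m : ℝ)
    {X : Type*} [Fintype X] (J : X → X → ℝ)
    (hJsym : ∀ x y, J x y = J y x) (hJ0 : ∀ x y, 0 ≤ J x y)
    (hJ1 : ∀ x, ∑ y, J x y = 1)
    (Fmf : (Fin S → ℝ) → ℝ)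
    (hFmf : ∀ u, Fmf u = (1/2) * ∑ s, ∑ s' ∈ univ.erase s, u s * u s'
        - lam * ∑ s, u s + (1/β) * ∑ s, u s * (Real.log (u s) - 1))
    (hlow : ∀ u : Fin S → ℝ, (∀ s, 0 ≤ u s) → m ≤ Fmf u)
    (emf : (Fin S → ℝ) → ℝ)
    (hemf : ∀ u, emf u = (1/2) * ∑ s, ∑ s' ∈ univ.erase s, u s * u s' - lam * ∑ s, u s)
    (Ent : (Fin S → ℝ) → ℝ)
    (hEnt : ∀ u, Ent u = -∑ s, u s * (Real.log (u s) - 1))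
    (F : (X → Fin S → ℝ) → ℝ)
    (hF : ∀ ρ, F ρ = ∑ x, (emf (fun s => ∑ y, J x y * ρ y s) - (1/β) * Ent (ρ x))) :
    (∀ ρ : X → Fin S → ℝ, (∀ x s, 0 ≤ ρ x s) → (Fintype.card X : ℝ) * m ≤ F ρ) ∧
      (∀ u : Fin S → ℝ, (∀ s, 0 ≤ u s) → Fmf u = m →
        F (fun _ => u) = (Fintype.card X : ℝ) * m) := by
  classical
  obtain rfl : Ent = entropy := funext hEnt
  have hJ : J ∈ doublyStochastic ℝ X := mem_doublyStochastic_iff_sum.2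
    ⟨hJ0, hJ1, fun y => by simpa only [hJsym] using hJ1 y⟩
  have hemf_eq : ∀ u, emf u = Fmf u + (1/β) * entropy u := fun u => by
    rw [hemf, hFmf, entropy]; ring
  have hsplit : ∀ ρ, F ρ = ∑ x, Fmf (∑ y, J x y • ρ y)
      + (1/β) * (∑ x, entropy (∑ y, J x y • ρ y) - ∑ x, entropy (ρ x)) := fun ρ => by
    have hJρ : ∀ x, (fun s => ∑ y, J x y * ρ y s) = ∑ y, J x y • ρ y := fun x => by
      ext s; simp only [Finset.sum_apply, Pi.smul_apply, smul_eq_mul]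
    simp only [hF, hJρ, hemf_eq, mul_sub, mul_sum, ← sum_add_distrib, ← sum_sub_distrib]
    exact sum_congr rfl fun x _ => by ring
  refine ⟨fun ρ hρ => ?_, fun u _ hum => ?_⟩
  · have hfree : (Fintype.card X : ℝ) * m ≤ ∑ x, Fmf (∑ y, J x y • ρ y) := by
      simpa using sum_le_sum fun x (_ : x ∈ univ) => hlow _ fun s => by
        simpa only [Finset.sum_apply, Pi.smul_apply, smul_eq_mul] using
          sum_nonneg fun y _ => mul_nonneg (hJ0 x y) (hρ y s)
    have hent := concaveOn_entropy.sum_le_sum_map_doublyStochastic hJ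
      fun x => Set.mem_univ_pi.2 fun s => hρ x s
    rw [hsplit]
    nlinarith [one_div_pos.2 hβ]
  · have hJconst : ∀ x, ∑ y, J x y • u = u := fun x => by rw [← sum_smul, hJ1, one_smul]
    simp [hsplit, hJconst, hum]

theorem stmt10 (S : ℕ) (hS : 2 ≤ S) (β lam : ℝ) (hβ : 0 < β) (m : ℝ)
    {X : Type*} [Fintype X] (J : X → X → ℝ)
    (hJsym : ∀ x y, J x y = J y x) (hJ0 : ∀ x y, 0 ≤ J x y)
    (hJ1 : ∀ x, ∑ y, J x y = 1)
    (Fmf : (Fin S → ℝ) → ℝ)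
    (hFmf : ∀ u, Fmf u = (1/2) * ∑ s, ∑ s' ∈ univ.erase s, u s * u s'
        - lam * ∑ s, u s + (1/β) * ∑ s, u s * (Real.log (u s) - 1))
    (hlow : ∀ u : Fin S → ℝ, (∀ s, 0 ≤ u s) → m ≤ Fmf u)
    (hatt : ∃ u : Fin S → ℝ, (∀ s, 0 ≤ u s) ∧ Fmf u = m)
    (emf : (Fin S → ℝ) → ℝ)
    (hemf : ∀ u, emf u = (1/2) * ∑ s, ∑ s' ∈ univ.erase s, u s * u s' - lam * ∑ s, u s)
    (Ent : (Fin S → ℝ) → ℝ)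
    (hEnt : ∀ u, Ent u = -∑ s, u s * (Real.log (u s) - 1))
    (F : (X → Fin S → ℝ) → ℝ)
    (hF : ∀ ρ, F ρ = ∑ x, (emf (fun s => ∑ y, J x y * ρ y s) - (1/β) * Ent (ρ x))) :
    (∀ ρ : X → Fin S → ℝ, (∀ x s, 0 ≤ ρ x s) → (Fintype.card X : ℝ) * m ≤ F ρ) ∧
      (∀ u : Fin S → ℝ, (∀ s, 0 ≤ u s) → Fmf u = m →
        F (fun _ => u) = (Fintype.card X : ℝ) * m) :=
  stmt10_general S β lam hβ m J hJsym hJ0 hJ1 Fmf hFmf hlow emf hemf Ent hEnt F hF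
end

section
/- Let S ≥ 1, β > 0, λ ∈ ℝ, and let T be the map on nonnegative functions ρ : X × {1,…,S} → ℝ≥0 (X a finite set) given by (Tρ)(x,s) = exp(−β(Σ_{s'≠s} Σ_{x'} V(x,x') ρ(x',s') + ψ(x,s) − λ)), where V(x,x') ≥ 0, ψ(x,s) ≥ 0, and Σ_{x'} V(x,x') ≤ ε for every x. If β·ε·e^{βλ}·(S−1) < 1, then: (a) the set O = {ρ : 0 ≤ ρ(x,s) ≤ e^{βλ}} is invariant under T; (b) T is a contraction on O in the sup norm with Lipschitz constant at most β ε e^{βλ}(S−1); (c) T has a unique fixed point in O, and every fixed point of T with nonnegative values lies in O. -/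
/-!
Every value of `T` is an exponential whose exponent is at most `β * lam`, because the
interaction field and `ψ` are nonnegative; hence `T` maps nonnegative functions into the box `O`,
and a nonnegative fixed point lies in `O`. On the half-line `(-∞, β * lam]` the exponential is
`e^{β lam}`-Lipschitz, and the field changes by at most `(S - 1) ε ‖ρ - σ‖∞`, so `T` is a
sup-norm contraction of the closed box and Banach's fixed point theorem applies.
-/

open Finset

theorem Real.lipschitzOnWith_exp_Iic (c : ℝ) :
    LipschitzOnWith (Real.exp c).toNNReal Real.exp (Set.Iic c) :=
  (convex_Iic c).lipschitzOnWith_of_nnnorm_deriv_le (fun x _ => Real.differentiableAt_exp)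
    fun x hx => by
      rw [Real.deriv_exp, ← NNReal.coe_le_coe, coe_nnnorm,
        Real.norm_of_nonneg (Real.exp_pos x).le, Real.coe_toNNReal _ (Real.exp_pos c).le]
      exact Real.exp_le_exp.2 hx

theorem LipschitzOnWith.existsUnique_isFixedPt {α : Type*} [MetricSpace α] {K : NNReal}
    {f : α → α} {s : Set α} (hK : K < 1) (hf : LipschitzOnWith K f s) (hs : IsComplete s)
    (hne : s.Nonempty) (hsf : Set.MapsTo f s s) :
    ∃! x, x ∈ s ∧ f x = x := by
  have hC : ContractingWith K (hsf.restrict f s s) := ⟨hK, hf.mapsToRestrict hsf⟩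
  obtain ⟨x₀, hx₀⟩ := hne
  obtain ⟨x, hxs, hfx, -⟩ := hC.exists_fixedPoint' hs hsf hx₀ (edist_ne_top _ _)
  refine ⟨x, ⟨hxs, hfx⟩, fun y ⟨hys, hfy⟩ => ?_⟩
  exact congrArg Subtype.val <|
    hC.fixedPoint_unique' (x := ⟨y, hys⟩) (y := ⟨x, hxs⟩) (Subtype.ext hfy) (Subtype.ext hfx)

namespace Potts

variable {X ι : Type*}

def box (c : ℝ) : Set (X → ι → ℝ) := {ρ | ∀ x s, 0 ≤ ρ x s ∧ ρ x s ≤ c}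

theorem isClosed_box (c : ℝ) : IsClosed (box c : Set (X → ι → ℝ)) := by
  simp only [box, Set.ofPred_forall, Set.ofPred_and]
  exact isClosed_iInter fun x => isClosed_iInter fun s =>
    (isClosed_le continuous_const (by fun_prop)).inter (isClosed_le (by fun_prop) continuous_const)

theorem zero_mem_box {c : ℝ} (hc : 0 ≤ c) : (0 : X → ι → ℝ) ∈ box c :=
  fun _ _ => ⟨le_rfl, hc⟩

variable [Fintype X] [Fintype ι] [DecidableEq ι]

def field (V : X → X → ℝ) (ρ : X → ι → ℝ) (x : X) (s : ι) : ℝ :=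
  ∑ s' ∈ univ.erase s, ∑ y, V x y * ρ y s'

noncomputable def map (β lam : ℝ) (V : X → X → ℝ) (ψ : X → ι → ℝ) (ρ : X → ι → ℝ) :
    X → ι → ℝ :=
  fun x s => Real.exp (-β * (field V ρ x s + ψ x s - lam))

theorem field_nonneg {V : X → X → ℝ} {ρ : X → ι → ℝ} (hV : ∀ x y, 0 ≤ V x y)
    (hρ : ∀ x s, 0 ≤ ρ x s) (x : X) (s : ι) : 0 ≤ field V ρ x s :=
  sum_nonneg fun s' _ => sum_nonneg fun y _ => mul_nonneg (hV x y) (hρ y s')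

theorem abs_field_sub_le {V : X → X → ℝ} {ε M : ℝ} {ρ σ : X → ι → ℝ}
    (hV : ∀ x y, 0 ≤ V x y) (hε : ∀ x, ∑ y, V x y ≤ ε) (hM : 0 ≤ M)
    (hρσ : ∀ y t, |ρ y t - σ y t| ≤ M) (x : X) (s : ι) :
    |field V ρ x s - field V σ x s| ≤ (Fintype.card ι - 1) * (ε * M) := by
  have hinner : ∀ t, |∑ y, V x y * (ρ y t - σ y t)| ≤ ε * M := fun t =>
    calc |∑ y, V x y * (ρ y t - σ y t)|
        ≤ ∑ y, V x y * M := by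
          refine (abs_sum_le_sum_abs _ _).trans (sum_le_sum fun y _ => ?_)
          rw [abs_mul, abs_of_nonneg (hV x y)]
          exact mul_le_mul_of_nonneg_left (hρσ y t) (hV x y)
      _ = (∑ y, V x y) * M := (sum_mul ..).symm
      _ ≤ ε * M := mul_le_mul_of_nonneg_right (hε x) hM
  have hcard : ((univ.erase s).card : ℝ) = Fintype.card ι - 1 := by
    rw [card_erase_of_mem (mem_univ s), card_univ, Nat.cast_sub (Fintype.card_pos_iff.2 ⟨s⟩),
      Nat.cast_one]
  calc |field V ρ x s - field V σ x s|
      = |∑ s' ∈ univ.erase s, ∑ y, V x y * (ρ y s' - σ y s')| := by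
        simp only [field, mul_sub, sum_sub_distrib]
    _ ≤ ∑ s' ∈ univ.erase s, ε * M :=
        (abs_sum_le_sum_abs _ _).trans (sum_le_sum fun t _ => hinner t)
    _ = (Fintype.card ι - 1) * (ε * M) := by rw [sum_const, nsmul_eq_mul, hcard]

variable {β lam : ℝ} {V : X → X → ℝ} {ψ : X → ι → ℝ}

theorem exponent_le (hβ : 0 ≤ β) (hV : ∀ x y, 0 ≤ V x y) (hψ : ∀ x s, 0 ≤ ψ x s)
    {ρ : X → ι → ℝ} (hρ : ∀ x s, 0 ≤ ρ x s) (x : X) (s : ι) :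
    -β * (field V ρ x s + ψ x s - lam) ≤ β * lam := by
  nlinarith [field_nonneg hV hρ x s, hψ x s]

theorem map_mem_box (hβ : 0 ≤ β) (hV : ∀ x y, 0 ≤ V x y) (hψ : ∀ x s, 0 ≤ ψ x s)
    {ρ : X → ι → ℝ} (hρ : ∀ x s, 0 ≤ ρ x s) : map β lam V ψ ρ ∈ box (Real.exp (β * lam)) :=
  fun x s => ⟨(Real.exp_pos _).le, Real.exp_le_exp.2 (exponent_le hβ hV hψ hρ x s)⟩

theorem mapsTo_box (hβ : 0 ≤ β) (hV : ∀ x y, 0 ≤ V x y) (hψ : ∀ x s, 0 ≤ ψ x s) :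
    Set.MapsTo (map β lam V ψ) (box (Real.exp (β * lam))) (box (Real.exp (β * lam))) :=
  fun _ hρ => map_mem_box hβ hV hψ fun x s => (hρ x s).1

theorem abs_map_sub_le {ε M : ℝ} (hβ : 0 ≤ β) (hV : ∀ x y, 0 ≤ V x y)
    (hψ : ∀ x s, 0 ≤ ψ x s) (hε : ∀ x, ∑ y, V x y ≤ ε) {ρ σ : X → ι → ℝ}
    (hρ : ∀ x s, 0 ≤ ρ x s) (hσ : ∀ x s, 0 ≤ σ x s) (hM : 0 ≤ M)
    (hρσ : ∀ y t, |ρ y t - σ y t| ≤ M) (x : X) (s : ι) :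
    |map β lam V ψ ρ x s - map β lam V ψ σ x s| ≤
      β * ε * Real.exp (β * lam) * (Fintype.card ι - 1) * M := by
  have hexp := (Real.lipschitzOnWith_exp_Iic (β * lam)).dist_le_mul _
    (exponent_le hβ hV hψ hρ x s) _ (exponent_le hβ hV hψ hσ x s)
  rw [Real.coe_toNNReal _ (Real.exp_pos _).le, Real.dist_eq, Real.dist_eq,
    show -β * (field V ρ x s + ψ x s - lam) - -β * (field V σ x s + ψ x s - lam) =
      -(β * (field V ρ x s - field V σ x s)) by ring,
    abs_neg, abs_mul, abs_of_nonneg hβ] at hexp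
  calc |map β lam V ψ ρ x s - map β lam V ψ σ x s|
      ≤ Real.exp (β * lam) * (β * |field V ρ x s - field V σ x s|) := hexp
    _ ≤ Real.exp (β * lam) * (β * ((Fintype.card ι - 1) * (ε * M))) := by
        gcongr
        exact abs_field_sub_le hV hε hM hρσ x s
    _ = β * ε * Real.exp (β * lam) * (Fintype.card ι - 1) * M := by ring

theorem lipschitzOnWith_map {ε : ℝ} (hβ : 0 ≤ β) (hV : ∀ x y, 0 ≤ V x y)
    (hψ : ∀ x s, 0 ≤ ψ x s) (hε : ∀ x, ∑ y, V x y ≤ ε) :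
    LipschitzOnWith (β * ε * Real.exp (β * lam) * (Fintype.card ι - 1)).toNNReal
      (map β lam V ψ) (box (Real.exp (β * lam))) := by
  refine LipschitzOnWith.of_dist_le_mul fun ρ hρ σ hσ => ?_
  refine (dist_pi_le_iff (by positivity)).2 fun x => (dist_pi_le_iff (by positivity)).2 fun s => ?_
  have hρσ : ∀ y t, |ρ y t - σ y t| ≤ dist ρ σ := fun y t =>
    (Real.dist_eq _ _).symm.trans_le ((dist_le_pi_dist _ _ t).trans (dist_le_pi_dist ρ σ y))
  rw [Real.dist_eq, Real.coe_toNNReal']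
  exact (abs_map_sub_le hβ hV hψ hε (fun x s => (hρ x s).1) (fun x s => (hσ x s).1)
    dist_nonneg hρσ x s).trans (mul_le_mul_of_nonneg_right (le_max_left _ _) dist_nonneg)

end Potts

theorem stmt16_general {X : Type*} [Fintype X] (S : ℕ)
    (β lam ε : ℝ) (hβ : 0 < β)
    (V : X → X → ℝ) (hV : ∀ x y, 0 ≤ V x y)
    (ψ : X → Fin S → ℝ) (hψ : ∀ x s, 0 ≤ ψ x s)
    (hε : ∀ x, ∑ y, V x y ≤ ε)
    (hcontr : β * ε * Real.exp (β * lam) * ((S : ℝ) - 1) < 1)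
    (T : (X → Fin S → ℝ) → (X → Fin S → ℝ))
    (hT : ∀ ρ x s, T ρ x s = Real.exp (-β *
      ((∑ s' ∈ univ.erase s, ∑ y, V x y * ρ y s') + ψ x s - lam)))
    (O : Set (X → Fin S → ℝ))
    (hO : O = {ρ | ∀ x s, 0 ≤ ρ x s ∧ ρ x s ≤ Real.exp (β * lam)}) :
    (∀ ρ ∈ O, T ρ ∈ O) ∧
    (∀ ρ ∈ O, ∀ σ ∈ O, ∀ x s,
      |T ρ x s - T σ x s| ≤ β * ε * Real.exp (β * lam) * ((S : ℝ) - 1) *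
        ⨆ p : X × Fin S, |ρ p.1 p.2 - σ p.1 p.2|) ∧
    (∃! ρ, ρ ∈ O ∧ T ρ = ρ) ∧
    (∀ ρ : X → Fin S → ℝ, (∀ x s, 0 ≤ ρ x s) → T ρ = ρ → ρ ∈ O) := by
  obtain rfl : T = Potts.map β lam V ψ := funext fun ρ => funext fun x => funext (hT ρ x)
  obtain rfl : O = Potts.box (Real.exp (β * lam)) := hO
  have hmaps := Potts.mapsTo_box (lam := lam) hβ.le hV hψ
  have hlip := Potts.lipschitzOnWith_map (lam := lam) hβ.le hV hψ hε
  rw [Fintype.card_fin] at hlip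
  refine ⟨hmaps, fun ρ hρ σ hσ x s => ?_,
    hlip.existsUnique_isFixedPt (Real.toNNReal_lt_one.2 hcontr) (Potts.isClosed_box _).isComplete
      ⟨0, Potts.zero_mem_box (Real.exp_pos _).le⟩ hmaps,
    fun ρ hρ hfix => hfix ▸ Potts.map_mem_box hβ.le hV hψ hρ⟩
  have hρσ : ∀ y t, |ρ y t - σ y t| ≤ ⨆ p : X × Fin S, |ρ p.1 p.2 - σ p.1 p.2| := fun y t =>
    le_ciSup (f := fun p : X × Fin S => |ρ p.1 p.2 - σ p.1 p.2|)
      (Set.finite_range _).bddAbove (y, t)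
  simpa only [Fintype.card_fin] using Potts.abs_map_sub_le hβ.le hV hψ hε
    (fun x s => (hρ x s).1) (fun x s => (hσ x s).1) (Real.iSup_nonneg fun _ => abs_nonneg _) hρσ x s

theorem stmt16 {X : Type*} [Fintype X] (S : ℕ) (hS : 1 ≤ S)
    (β lam ε : ℝ) (hβ : 0 < β)
    (V : X → X → ℝ) (hV : ∀ x y, 0 ≤ V x y)
    (ψ : X → Fin S → ℝ) (hψ : ∀ x s, 0 ≤ ψ x s)
    (hε : ∀ x, ∑ y, V x y ≤ ε)
    (hcontr : β * ε * Real.exp (β * lam) * ((S : ℝ) - 1) < 1)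
    (T : (X → Fin S → ℝ) → (X → Fin S → ℝ))
    (hT : ∀ ρ x s, T ρ x s = Real.exp (-β *
      ((∑ s' ∈ univ.erase s, ∑ y, V x y * ρ y s') + ψ x s - lam)))
    (O : Set (X → Fin S → ℝ))
    (hO : O = {ρ | ∀ x s, 0 ≤ ρ x s ∧ ρ x s ≤ Real.exp (β * lam)}) :
    (∀ ρ ∈ O, T ρ ∈ O) ∧
    (∀ ρ ∈ O, ∀ σ ∈ O, ∀ x s,
      |T ρ x s - T σ x s| ≤ β * ε * Real.exp (β * lam) * ((S : ℝ) - 1) *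
        ⨆ p : X × Fin S, |ρ p.1 p.2 - σ p.1 p.2|) ∧
    (∃! ρ, ρ ∈ O ∧ T ρ = ρ) ∧
    (∀ ρ : X → Fin S → ℝ, (∀ x s, 0 ≤ ρ x s) → T ρ = ρ → ρ ∈ O) :=
  stmt16_general S β lam ε hβ V hV ψ hψ hε hcontr T hT O hO
end
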